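/- arXiv:2501.01783 — 3 statements merged into one kernel-verified Lean document; each statement's English description precedes it below -/
import Mathlib

section
/- Let D ∈ ℕ, 0 < τ_lo ≤ τ_hi, and α : [0,∞) → [τ_lo, τ_hi] Borel measurable with μ_t = exp(−∫_0^t α_s ds) and σ_t = √(1 − μ_t²). Let F̄, τ_min, τ_max > 0, m > e, T_low = m^{−τ_min}, T_up = τ_max log m. Then there exists a constant C̃₁₅ > 0 depending only on (D, τ_lo, τ_min, τ_max, F̄) such that every measurable function f : ℝ^D × ℝ → ℝ^D satisfying ‖f(x,t)‖_∞ ≤ F̄ √(log m)/σ_t for all x ∈ ℝ^D and t > 0 satisfies ℓ_f(x) ≤ C̃₁₅ (log m)² for all x ∈ [−1,1]^D. -/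
open MeasureTheory
open scoped BigOperators ENNReal NNReal

noncomputable section

namespace DMpaper

attribute [local instance] Classical.propDecidable

/-- The cube `[-1,1]^D`. -/
def cube (D : ℕ) : Set (Fin D → ℝ) := Set.Icc (-1) 1

/-- Density of the Gaussian `N(0, σ² I_D)` on `ℝ^D`. -/
def gaussD (D : ℕ) (σ : ℝ) (x : Fin D → ℝ) : ℝ :=
  (2 * Real.pi * σ ^ 2) ^ (-(D : ℝ) / 2) * Real.exp (-(∑ i, x i ^ 2) / (2 * σ ^ 2))

/-- `μ_t = exp (-∫_0^t α_s ds)` for the forward process. -/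
def muT (α : ℝ → ℝ) (t : ℝ) : ℝ := Real.exp (-∫ s in Set.Ioc (0 : ℝ) t, α s)

/-- `σ_t = √(1 - μ_t²)` for the forward process. -/
def sigmaT (α : ℝ → ℝ) (t : ℝ) : ℝ := Real.sqrt (1 - muT α t ^ 2)

/-- The marginal density `p_t(x) = ∫_{[-1,1]^D} p₀(y) φ_{σ_t}(x - μ_t y) dy`
of the forward process. -/
def fwdDen (D : ℕ) (α : ℝ → ℝ) (p₀ : (Fin D → ℝ) → ℝ) (t : ℝ) (x : Fin D → ℝ) : ℝ :=
  ∫ y in cube D, p₀ y * gaussD D (sigmaT α t) (x - muT α t • y)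

/-- `p₀` is a probability density supported on `[-1,1]^D`, and `α` is Borel measurable
with values in `[τlo, τhi]` on `[0,∞)`. -/
def ForwardHyp (D : ℕ) (τlo τhi : ℝ) (α : ℝ → ℝ) (p₀ : (Fin D → ℝ) → ℝ) : Prop :=
  Measurable p₀ ∧ (∀ x, 0 ≤ p₀ x) ∧ (∀ x, x ∉ cube D → p₀ x = 0) ∧ (∫ x, p₀ x) = 1 ∧
    Measurable α ∧ ∀ t, 0 ≤ t → τlo ≤ α t ∧ α t ≤ τhi

/-- The score-matching loss
`ℓ_f(x) = ∫_{Tl}^{Tu} ∫_{ℝ^D} ‖f(y,t) + (y - μ_t x)/σ_t²‖₂² φ_{σ_t}(y - μ_t x) dy dt`. -/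
def lossL (D : ℕ) (α : ℝ → ℝ) (Tl Tu : ℝ) (f : (Fin D → ℝ) → ℝ → Fin D → ℝ)
    (x : Fin D → ℝ) : ℝ :=
  ∫ t in Set.Icc Tl Tu, ∫ y,
    (∑ i, (f y t i + (y i - muT α t * x i) / sigmaT α t ^ 2) ^ 2) *
      gaussD D (sigmaT α t) (y - muT α t • x)

/-! For fixed `t`, `(a + b)² ≤ 2a² + 2b²` and the second moment `D σ_t²` of `φ_{σ_t}` bound the
inner integral by `2D (K² + σ_t⁻²)`, where `K = F̄ √(log m) / σ_t` bounds `f`; this is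
`O(log m / σ_t²)`. Since `μ_t ≤ e^{-τ_lo t}`, we have `σ_t² ≥ 1 - e^{-2 τ_lo t}`, hence
`σ_t⁻² ≤ (2 τ_lo t)⁻¹ + 1`. Integrating over `[T_low, T_up]` gives
`log (T_up / T_low) / (2 τ_lo) + T_up = O(log m)`. -/

open Real ProbabilityTheory

section Gaussian

variable {D : ℕ} {σ : ℝ}

lemma integral_sq_mul_gaussianPDFReal {v : ℝ≥0} (hv : v ≠ 0) :
    ∫ x, x ^ 2 * gaussianPDFReal 0 v x = v := by
  have h := variance_of_integral_eq_zero (μ := gaussianReal 0 v) aemeasurable_id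
    integral_id_gaussianReal
  rw [variance_id_gaussianReal, integral_gaussianReal_eq_integral_smul hv] at h
  simpa [mul_comm] using h.symm

lemma gaussD_nonneg (x : Fin D → ℝ) : 0 ≤ gaussD D σ x := by
  unfold gaussD; positivity

lemma gaussD_eq_prod (σ : ℝ) (x : Fin D → ℝ) :
    gaussD D σ x = ∏ i, gaussianPDFReal 0 (σ ^ 2).toNNReal (x i) := by
  have hbase : (0 : ℝ) ≤ 2 * π * σ ^ 2 := by positivity
  have hpow : (2 * π * σ ^ 2) ^ (-((D : ℝ) / 2)) = (√(2 * π * σ ^ 2))⁻¹ ^ D := by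
    rw [sqrt_eq_rpow, ← rpow_neg hbase, ← rpow_mul_natCast hbase]
    ring_nf
  simp only [gaussD, gaussianPDFReal, Real.coe_toNNReal _ (sq_nonneg σ), sub_zero,
    Finset.prod_mul_distrib, Finset.prod_const, Finset.card_univ, Fintype.card_fin, ← exp_sum,
    hpow, neg_div, ← Finset.sum_div, Finset.sum_neg_distrib]

lemma integral_gaussD (hσ : σ ≠ 0) : ∫ y, gaussD D σ y = 1 := by
  simp_rw [gaussD_eq_prod σ]
  rw [integral_fintype_prod_volume_eq_prod (fun _ => gaussianPDFReal 0 _),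
    integral_gaussianPDFReal_eq_one _ (by simpa using hσ)]
  simp

lemma integral_sq_mul_gaussD (hσ : σ ≠ 0) (i : Fin D) :
    ∫ y, y i ^ 2 * gaussD D σ y = σ ^ 2 := by
  have hv : (σ ^ 2).toNNReal ≠ 0 := by simpa using hσ
  have hprod : ∀ y : Fin D → ℝ, y i ^ 2 * gaussD D σ y =
      ∏ j, (if j = i then (y j) ^ 2 else 1) * gaussianPDFReal 0 (σ ^ 2).toNNReal (y j) := by
    intro y
    rw [Finset.prod_mul_distrib, Finset.prod_ite_eq' Finset.univ i, if_pos (Finset.mem_univ i),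
      gaussD_eq_prod]
  simp_rw [hprod]
  rw [integral_fintype_prod_volume_eq_prod
    (fun j u => (if j = i then u ^ 2 else 1) * gaussianPDFReal 0 (σ ^ 2).toNNReal u)]
  rw [Finset.prod_eq_single i (fun j _ hj => by simp [hj, integral_gaussianPDFReal_eq_one _ hv])
    (by simp)]
  simpa [Real.coe_toNNReal _ (sq_nonneg σ)] using integral_sq_mul_gaussianPDFReal hv

lemma integrable_gaussD (hσ : σ ≠ 0) : Integrable (gaussD D σ) :=
  .of_integral_ne_zero (by simp [integral_gaussD hσ])

lemma integrable_sq_mul_gaussD (hσ : σ ≠ 0) (i : Fin D) :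
    Integrable fun y : Fin D → ℝ => y i ^ 2 * gaussD D σ y :=
  .of_integral_ne_zero (by rw [integral_sq_mul_gaussD hσ]; positivity)

lemma integrable_sum_sq_mul_gaussD (hσ : σ ≠ 0) :
    Integrable fun y : Fin D → ℝ => (∑ i, y i ^ 2) * gaussD D σ y := by
  simp_rw [Finset.sum_mul]
  exact integrable_finsetSum _ fun i _ => integrable_sq_mul_gaussD hσ i

lemma integral_sum_sq_mul_gaussD (hσ : σ ≠ 0) :
    ∫ y, (∑ i, y i ^ 2) * gaussD D σ y = D * σ ^ 2 := by
  simp_rw [Finset.sum_mul]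
  rw [integral_finsetSum _ fun i _ => integrable_sq_mul_gaussD hσ i]
  simp [integral_sq_mul_gaussD hσ]

lemma sum_sq_add_div_le {K : ℝ} (a b : Fin D → ℝ) (ha : ∀ i, |a i| ≤ K) :
    ∑ i, (a i + b i / σ ^ 2) ^ 2 ≤ 2 * D * K ^ 2 + 2 / σ ^ 4 * ∑ i, b i ^ 2 := by
  calc ∑ i, (a i + b i / σ ^ 2) ^ 2 ≤ ∑ i : Fin D, (2 * K ^ 2 + 2 / σ ^ 4 * b i ^ 2) := by
        refine Finset.sum_le_sum fun i _ => add_sq_le.trans ?_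
        have hKi : a i ^ 2 ≤ K ^ 2 := sq_le_sq' (abs_le.1 (ha i)).1 (abs_le.1 (ha i)).2
        have hbi : (b i / σ ^ 2) ^ 2 = b i ^ 2 / σ ^ 4 := by ring
        rw [hbi, div_eq_mul_inv, div_eq_mul_inv]
        nlinarith
    _ = 2 * D * K ^ 2 + 2 / σ ^ 4 * ∑ i, b i ^ 2 := by
        simp only [Finset.sum_add_distrib, Finset.sum_const, Finset.card_univ, Fintype.card_fin,
          nsmul_eq_mul, Finset.mul_sum]
        ring

lemma integral_sum_sq_add_mul_gaussD_le (hσ : σ ≠ 0) {K : ℝ} (c : Fin D → ℝ)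
    (F : (Fin D → ℝ) → Fin D → ℝ) (hF : ∀ y i, |F y i| ≤ K) :
    ∫ y, (∑ i, (F y i + (y i - c i) / σ ^ 2) ^ 2) * gaussD D σ (y - c)
      ≤ 2 * D * (K ^ 2 + 1 / σ ^ 2) := by
  set Z : (Fin D → ℝ) → ℝ := fun z =>
    2 * D * K ^ 2 * gaussD D σ z + 2 / σ ^ 4 * ((∑ i, z i ^ 2) * gaussD D σ z) with hZ
  have hZint : Integrable Z :=
    ((integrable_gaussD hσ).const_mul _).add ((integrable_sum_sq_mul_gaussD hσ).const_mul _)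
  have hle : ∀ y, (∑ i, (F y i + (y i - c i) / σ ^ 2) ^ 2) * gaussD D σ (y - c) ≤ Z (y - c) := by
    intro y
    have h := mul_le_mul_of_nonneg_right (sum_sq_add_div_le (σ := σ) (F y) (y - c) (hF y))
      (gaussD_nonneg (σ := σ) (y - c))
    simp only [hZ, Pi.sub_apply] at h ⊢
    linarith
  calc ∫ y, (∑ i, (F y i + (y i - c i) / σ ^ 2) ^ 2) * gaussD D σ (y - c)
      ≤ ∫ y, Z (y - c) :=
        integral_mono_of_nonneg (ae_of_all _ fun y => mul_nonneg (by positivity) (gaussD_nonneg _))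
          (hZint.comp_sub_right c) (ae_of_all _ hle)
    _ = ∫ z, Z z := integral_sub_right_eq_self Z c
    _ = 2 * D * (K ^ 2 + 1 / σ ^ 2) := by
        rw [integral_add ((integrable_gaussD hσ).const_mul _)
          ((integrable_sum_sq_mul_gaussD hσ).const_mul _), integral_const_mul, integral_const_mul,
          integral_gaussD hσ, integral_sum_sq_mul_gaussD hσ]
        field_simp

end Gaussian

lemma one_sub_exp_neg_pos {x : ℝ} (hx : 0 < x) : 0 < 1 - exp (-x) :=
  sub_pos.2 (exp_lt_one_iff.2 (neg_lt_zero.2 hx))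

lemma inv_one_sub_exp_neg_le {x : ℝ} (hx : 0 < x) : (1 - exp (-x))⁻¹ ≤ x⁻¹ + 1 := by
  have hle : x / (1 + x) ≤ 1 - exp (-x) := by
    have h : exp (-x) ≤ (1 + x)⁻¹ := by
      rw [exp_neg]
      exact inv_anti₀ (by positivity) (by linarith [add_one_le_exp x])
    have : x / (1 + x) = 1 - (1 + x)⁻¹ := by field_simp; ring
    linarith
  calc (1 - exp (-x))⁻¹ ≤ (x / (1 + x))⁻¹ := inv_anti₀ (by positivity) hle
    _ = x⁻¹ + 1 := by field_simp

section ForwardProcess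

variable {τlo τhi : ℝ} {α : ℝ → ℝ}

lemma mul_le_integral_Ioc_of_bounds (hα : Measurable α)
    (hb : ∀ t, 0 ≤ t → τlo ≤ α t ∧ α t ≤ τhi) {t : ℝ} (ht : 0 ≤ t) :
    τlo * t ≤ ∫ s in Set.Ioc 0 t, α s := by
  have hint : IntegrableOn α (Set.Ioc 0 t) :=
    Measure.integrableOn_of_bounded measure_Ioc_lt_top.ne hα.aestronglyMeasurable
      ((ae_restrict_iff' measurableSet_Ioc).2 (ae_of_all _ fun s hs =>
        abs_le_max_abs_abs (hb s hs.1.le).1 (hb s hs.1.le).2))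
  simpa [ht, mul_comm] using setIntegral_ge_of_const_le_real measurableSet_Ioc
    measure_Ioc_lt_top.ne (fun s hs => (hb s hs.1.le).1) hint

lemma one_sub_exp_le_sigmaT_sq (hα : Measurable α)
    (hb : ∀ t, 0 ≤ t → τlo ≤ α t ∧ α t ≤ τhi) {t : ℝ} (ht : 0 ≤ t) :
    1 - exp (-(2 * τlo * t)) ≤ sigmaT α t ^ 2 := by
  have hμ : muT α t ^ 2 ≤ exp (-(2 * τlo * t)) := by
    have h : muT α t ≤ exp (-(τlo * t)) :=
      exp_le_exp.2 (neg_le_neg (mul_le_integral_Ioc_of_bounds hα hb ht))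
    calc muT α t ^ 2 ≤ exp (-(τlo * t)) ^ 2 := pow_le_pow_left₀ (exp_pos _).le h 2
      _ = exp (-(2 * τlo * t)) := by rw [← exp_nat_mul]; ring_nf
  rw [sigmaT, sq_sqrt']
  exact le_max_of_le_left (by linarith)

lemma sigmaT_ne_zero (hτlo : 0 < τlo) (hα : Measurable α)
    (hb : ∀ t, 0 ≤ t → τlo ≤ α t ∧ α t ≤ τhi) {t : ℝ} (ht : 0 < t) :
    sigmaT α t ≠ 0 :=
  pow_ne_zero_iff two_ne_zero |>.1 <| ne_of_gt <|
    (one_sub_exp_neg_pos (by positivity)).trans_le (one_sub_exp_le_sigmaT_sq hα hb ht.le)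

lemma inv_sigmaT_sq_le (hτlo : 0 < τlo) (hα : Measurable α)
    (hb : ∀ t, 0 ≤ t → τlo ≤ α t ∧ α t ≤ τhi) {t : ℝ} (ht : 0 < t) :
    (sigmaT α t ^ 2)⁻¹ ≤ (2 * τlo * t)⁻¹ + 1 :=
  calc (sigmaT α t ^ 2)⁻¹ ≤ (1 - exp (-(2 * τlo * t)))⁻¹ :=
        inv_anti₀ (one_sub_exp_neg_pos (by positivity)) (one_sub_exp_le_sigmaT_sq hα hb ht.le)
    _ ≤ (2 * τlo * t)⁻¹ + 1 := inv_one_sub_exp_neg_le (by positivity)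

lemma integral_score_error_le (hτlo : 0 < τlo) (hα : Measurable α)
    (hb : ∀ t, 0 ≤ t → τlo ≤ α t ∧ α t ≤ τhi) {t : ℝ} (ht : 0 < t) {D : ℕ} {Fb L : ℝ}
    (hL : 1 ≤ L) (F : (Fin D → ℝ) → Fin D → ℝ)
    (hF : ∀ y i, |F y i| ≤ Fb * √L / sigmaT α t) (x : Fin D → ℝ) :
    ∫ y, (∑ i, (F y i + (y i - muT α t * x i) / sigmaT α t ^ 2) ^ 2) *
        gaussD D (sigmaT α t) (y - muT α t • x)
      ≤ 2 * D * (Fb ^ 2 + 1) * L * ((2 * τlo * t)⁻¹ + 1) := by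
  have hσ := sigmaT_ne_zero hτlo hα hb ht
  have h := integral_sum_sq_add_mul_gaussD_le hσ (muT α t • x) F hF
  simp only [Pi.smul_apply, smul_eq_mul] at h
  have hK : (Fb * √L / sigmaT α t) ^ 2 + 1 / sigmaT α t ^ 2
      = (Fb ^ 2 * L + 1) * (sigmaT α t ^ 2)⁻¹ := by
    rw [div_pow, mul_pow, sq_sqrt (by linarith)]
    field_simp
  rw [hK] at h
  refine h.trans ?_
  rw [show 2 * D * (Fb ^ 2 + 1) * L * ((2 * τlo * t)⁻¹ + 1)
    = 2 * D * ((Fb ^ 2 + 1) * L * ((2 * τlo * t)⁻¹ + 1)) by ring]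
  gcongr 2 * D * (?_ * ?_)
  · nlinarith [sq_nonneg Fb]
  · exact inv_sigmaT_sq_le hτlo hα hb ht

end ForwardProcess

section TimeIntegral

variable {c a b : ℝ}

lemma integrableOn_inv_mul (ha : 0 < a) : IntegrableOn (fun t => (c * t)⁻¹) (Set.Icc a b) := by
  simp_rw [mul_inv]
  exact (continuousOn_const.mul (continuousOn_inv₀.mono fun t ht =>
    (ha.trans_le ht.1).ne')).integrableOn_Icc

lemma integral_Icc_inv_mul_add_one (ha : 0 < a) (hab : a ≤ b) :
    ∫ t in Set.Icc a b, ((c * t)⁻¹ + 1) = c⁻¹ * log (b / a) + (b - a) := by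
  rw [integral_Icc_eq_integral_Ioc, ← intervalIntegral.integral_of_le hab,
    intervalIntegral.integral_add ?_ intervalIntegrable_const]
  · simp_rw [mul_inv]
    rw [intervalIntegral.integral_const_mul, integral_inv_of_pos ha (ha.trans_le hab),
      intervalIntegral.integral_const, smul_eq_mul, mul_one]
  · exact (intervalIntegrable_iff_integrableOn_Icc_of_le hab).2 (integrableOn_inv_mul ha)

lemma integral_Icc_inv_mul_add_one_le (hc : 0 < c) {τmin τmax m : ℝ} (hτmin : 0 ≤ τmin)
    (hτmax : 0 < τmax) (hm : exp 1 < m) :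
    ∫ t in Set.Icc (m ^ (-τmin)) (τmax * log m), ((c * t)⁻¹ + 1)
      ≤ ((|log τmax| + 1 + τmin) / c + τmax) * log m := by
  have hm0 : 0 < m := (exp_pos 1).trans hm
  have hL : 1 < log m := by rwa [lt_log_iff_exp_lt hm0]
  have hTl : 0 < m ^ (-τmin) := rpow_pos_of_pos hm0 _
  by_cases hab : m ^ (-τmin) ≤ τmax * log m
  swap
  · rw [Set.Icc_eq_empty hab, Measure.restrict_empty, integral_zero_measure]
    positivity
  have hlog : log (τmax * log m / m ^ (-τmin)) ≤ (|log τmax| + 1 + τmin) * log m := by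
    rw [log_div (by positivity) hTl.ne', log_mul hτmax.ne' (by positivity), log_rpow hm0]
    have h1 : log (log m) ≤ log m := (log_le_sub_one_of_pos (by positivity)).trans (by linarith)
    have h2 : log τmax ≤ |log τmax| * log m :=
      (le_abs_self _).trans (le_mul_of_one_le_right (abs_nonneg _) hL.le)
    nlinarith
  rw [integral_Icc_inv_mul_add_one hTl hab]
  have hscaled := mul_le_mul_of_nonneg_left hlog (inv_nonneg.2 hc.le)
  have hRHS : ((|log τmax| + 1 + τmin) / c + τmax) * log m
      = c⁻¹ * ((|log τmax| + 1 + τmin) * log m) + τmax * log m := by ring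
  linarith

end TimeIntegral

theorem statement_11_general
    (D : ℕ) (hD : 0 < D) (τlo τhi Fb τmin τmax : ℝ)
    (hτlo : 0 < τlo)
    (hτmin : 0 < τmin) (hτmax : 0 < τmax) :
    ∃ C₁₅ : ℝ, 0 < C₁₅ ∧
      ∀ m : ℝ, Real.exp 1 < m →
      ∀ α : ℝ → ℝ, Measurable α → (∀ t, 0 ≤ t → τlo ≤ α t ∧ α t ≤ τhi) →
      ∀ f : (Fin D → ℝ) → ℝ → Fin D → ℝ,
        Measurable (fun p : (Fin D → ℝ) × ℝ => f p.1 p.2) →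
        (∀ (x : Fin D → ℝ) (t : ℝ), 0 < t → ∀ i,
          |f x t i| ≤ Fb * Real.sqrt (Real.log m) / sigmaT α t) →
        ∀ x ∈ cube D,
          lossL D α (m ^ (-τmin)) (τmax * Real.log m) f x ≤ C₁₅ * Real.log m ^ 2 := by
  set A := (|log τmax| + 1 + τmin) / (2 * τlo) + τmax
  refine ⟨2 * D * (Fb ^ 2 + 1) * A, by positivity, ?_⟩
  intro m hm α hα hb f _ hf x _
  have hm0 : 0 < m := (exp_pos 1).trans hm
  have hL : 1 < log m := by rwa [lt_log_iff_exp_lt hm0]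
  have hTl : 0 < m ^ (-τmin) := rpow_pos_of_pos hm0 _
  set B := 2 * D * (Fb ^ 2 + 1) * log m
  calc lossL D α (m ^ (-τmin)) (τmax * log m) f x
      ≤ ∫ t in Set.Icc (m ^ (-τmin)) (τmax * log m), B * ((2 * τlo * t)⁻¹ + 1) := by
        refine integral_mono_of_nonneg (ae_of_all _ fun t => integral_nonneg fun y =>
          mul_nonneg (by positivity) (gaussD_nonneg _))
          (((integrableOn_inv_mul hTl).add (integrableOn_const measure_Icc_lt_top.ne)).const_mul B)
          ((ae_restrict_iff' measurableSet_Icc).2 (ae_of_all _ fun t ht => ?_))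
        have ht : 0 < t := hTl.trans_le ht.1
        exact integral_score_error_le hτlo hα hb ht hL.le (fun y => f y t) (fun y => hf y t ht) x
    _ = B * ∫ t in Set.Icc (m ^ (-τmin)) (τmax * log m), ((2 * τlo * t)⁻¹ + 1) :=
        integral_const_mul _ _
    _ ≤ B * (A * log m) := by
        gcongr
        exact integral_Icc_inv_mul_add_one_le (by positivity) hτmin.le hτmax hm
    _ = 2 * D * (Fb ^ 2 + 1) * A * log m ^ 2 := by ring

/-- Proposition C.3 of the paper, boundedness part: the
score-matching loss of any bounded measurable `f` is bounded by `C (log m)²`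
on `[-1,1]^D`. -/
theorem statement_11
    (D : ℕ) (hD : 0 < D) (τlo τhi Fb τmin τmax : ℝ)
    (hτlo : 0 < τlo) (hττ : τlo ≤ τhi) (hF : 0 < Fb)
    (hτmin : 0 < τmin) (hτmax : 0 < τmax) :
    ∃ C₁₅ : ℝ, 0 < C₁₅ ∧
      ∀ m : ℝ, Real.exp 1 < m →
      ∀ α : ℝ → ℝ, Measurable α → (∀ t, 0 ≤ t → τlo ≤ α t ∧ α t ≤ τhi) →
      ∀ f : (Fin D → ℝ) → ℝ → Fin D → ℝ,
        Measurable (fun p : (Fin D → ℝ) × ℝ => f p.1 p.2) →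
        (∀ (x : Fin D → ℝ) (t : ℝ), 0 < t → ∀ i,
          |f x t i| ≤ Fb * Real.sqrt (Real.log m) / sigmaT α t) →
        ∀ x ∈ cube D,
          lossL D α (m ^ (-τmin)) (τmax * Real.log m) f x ≤ C₁₅ * Real.log m ^ 2 :=
  statement_11_general D hD τlo τhi Fb τmin τmax hτlo hτmin hτmax

end DMpaper

end
end

section
/- Let D ∈ ℕ, K, τ₁ > 0, 0 < τ_lo ≤ τ_hi, and let p₀ be a probability density on ℝ^D supported on [−1,1]^D with τ₁ ≤ p₀(x) ≤ K for all x ∈ [−1,1]^D; let α, μ_t, σ_t, p_t be as in the forward process. Then there exists a constant C > 0 depending only on (D, K, τ₁, τ_hi, τ_lo) such that for every x ∈ ℝ^D and every t > 0, ‖∇_x log p_t(x)‖₂ ≤ (C/σ_t) · max( (‖x‖_∞ − μ_t)/σ_t, 1 ). -/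
/-!
Write `u_j = (x_j - μ_t y_j) / σ_t`. The Gaussian kernel factorises over the coordinates, so
`∂ᵢ log p_t(x) = -σ_t⁻¹ E[uᵢ]`, the expectation being against the density proportional to
`p₀(y) ∏ⱼ exp(-u_j² / 2)` on the cube. As `τ₁ ≤ p₀ ≤ K` there, `|E[uᵢ]|` is at most `K / τ₁` times
the same ratio for uniform `p₀`, which factorises: every coordinate but the `i`-th cancels, leaving
`∫ |u| e^{-u²/2} / ∫ e^{-u²/2}` over the interval `[(xᵢ - μ_t) / σ_t, (xᵢ + μ_t) / σ_t]`.
If `ℓ` is the distance of that interval from the origin, the ratio is `O(max ℓ 1)`: for `ℓ ≤ 1`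
both integrals are comparable to the length of the interval capped at `1`; for `ℓ ≥ 1` either the
interval is short, so `|u| ≤ 2ℓ` on it, or the numerator is at most `e^{-ℓ²/2}` while the
denominator is at least `e^{-ℓ²/2 - 2} / ℓ`, from the subinterval `[ℓ, ℓ + 1/ℓ]`.
-/


open MeasureTheory
open scoped BigOperators ENNReal NNReal

noncomputable section

namespace DMpaper

attribute [local instance] Classical.propDecidable

/-- Partial derivative in the `i`-th coordinate. -/
def pderivG (D : ℕ) (i : Fin D) (f : (Fin D → ℝ) → ℝ) : (Fin D → ℝ) → ℝ :=
  fun x => deriv (fun s : ℝ => f (Function.update x i s)) (x i)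

/-- Mixed partial derivative for a multi-index `γ`. -/
def mderivG (D : ℕ) (γ : Fin D → ℕ) (f : (Fin D → ℝ) → ℝ) : (Fin D → ℝ) → ℝ :=
  (List.finRange D).foldr (fun i g => (pderivG D i)^[γ i] g) f

/-- The score function `f₀(x,t) = ∇ₓ log p_t(x)`. -/
def score (D : ℕ) (α : ℝ → ℝ) (p₀ : (Fin D → ℝ) → ℝ) (x : Fin D → ℝ) (t : ℝ) :
    Fin D → ℝ :=
  fun i => pderivG D i (fun z => Real.log (fwdDen D α p₀ t z)) x

/-- The gradient `∇ₓ p_t(x)`. -/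
def gradP (D : ℕ) (α : ℝ → ℝ) (p₀ : (Fin D → ℝ) → ℝ) (t : ℝ) (x : Fin D → ℝ) :
    Fin D → ℝ :=
  fun i => pderivG D i (fwdDen D α p₀ t) x

open Set

def gaussKernel (u : ℝ) : ℝ := Real.exp (-u ^ 2 / 2)

lemma gaussKernel_pos (u : ℝ) : 0 < gaussKernel u := Real.exp_pos _

@[fun_prop]
lemma continuous_gaussKernel : Continuous gaussKernel := by
  unfold gaussKernel; fun_prop

lemma gaussKernel_neg (u : ℝ) : gaussKernel (-u) = gaussKernel u := by
  simp [gaussKernel]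

lemma gaussKernel_le_one (u : ℝ) : gaussKernel u ≤ 1 :=
  Real.exp_le_one_iff.2 (by nlinarith [sq_nonneg u])

lemma gaussKernel_le_of_abs_le {u v : ℝ} (h : |u| ≤ v) : gaussKernel v ≤ gaussKernel u := by
  have : u ^ 2 ≤ v ^ 2 := by
    simpa only [sq_abs] using pow_le_pow_left₀ (abs_nonneg u) h 2
  exact Real.exp_le_exp.2 (by linarith)

lemma hasDerivAt_gaussKernel (u : ℝ) : HasDerivAt gaussKernel (-u * gaussKernel u) u := by
  have hfun : gaussKernel = fun v => Real.exp (-1 / 2 * v ^ 2) := by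
    ext v; simp only [gaussKernel]; ring_nf
  rw [hfun]
  convert ((hasDerivAt_pow 2 u).const_mul (-1 / 2 : ℝ)).exp using 1
  push_cast; ring

lemma abs_mul_gaussKernel_le_one (u : ℝ) : |u| * gaussKernel u ≤ 1 := by
  have hexp : u ^ 2 / 2 + 1 ≤ Real.exp (u ^ 2 / 2) := Real.add_one_le_exp _
  have hu : |u| ≤ u ^ 2 / 2 + 1 := by nlinarith [sq_abs u, sq_nonneg (|u| - 1)]
  rw [gaussKernel, neg_div, Real.exp_neg, ← div_eq_mul_inv, div_le_one (Real.exp_pos _)]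
  linarith

lemma integrable_abs_mul_gaussKernel : Integrable fun u => |u| * gaussKernel u := by
  refine (integrable_mul_exp_neg_mul_sq (b := 1 / 2) (by norm_num)).abs.congr
    (Filter.Eventually.of_forall fun u => ?_)
  simp only [gaussKernel, abs_mul, Real.abs_exp]
  ring_nf

lemma integral_abs_mul_gaussKernel_nonneg : 0 ≤ ∫ u, |u| * gaussKernel u :=
  integral_nonneg fun u => mul_nonneg (abs_nonneg u) (gaussKernel_pos u).le

lemma sub_mul_gaussKernel_le_integral {c d : ℝ} (hcd : c ≤ d) :
    (d - c) * gaussKernel (max |c| |d|) ≤ ∫ u in c..d, gaussKernel u := by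
  have h := intervalIntegral.integral_mono_on (μ := volume) hcd intervalIntegrable_const
    (continuous_gaussKernel.intervalIntegrable c d)
    fun u hu => gaussKernel_le_of_abs_le (abs_le_max_abs_abs hu.1 hu.2)
  simpa [mul_comm] using h

lemma integral_gaussKernel_mono_interval {a b c d : ℝ} (hca : c ≤ a) (hab : a ≤ b)
    (hbd : b ≤ d) : ∫ u in a..b, gaussKernel u ≤ ∫ u in c..d, gaussKernel u :=
  intervalIntegral.integral_mono_interval hca hab hbd
    (Filter.Eventually.of_forall fun u => (gaussKernel_pos u).le)
    (continuous_gaussKernel.intervalIntegrable c d)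

lemma sub_le_exp_two_mul_integral_gaussKernel {c d : ℝ} (hc : -2 ≤ c) (hcd : c ≤ d)
    (hd : d ≤ 2) : d - c ≤ Real.exp 2 * ∫ u in c..d, gaussKernel u := by
  have he : 0 < Real.exp 2 := Real.exp_pos 2
  have hg2 : 1 ≤ Real.exp 2 * gaussKernel 2 := by
    rw [gaussKernel, ← Real.exp_add]; norm_num
  have hmax : max |c| |d| ≤ 2 :=
    max_le (abs_le.2 ⟨by linarith, by linarith⟩) (abs_le.2 ⟨by linarith, by linarith⟩)
  have hg : gaussKernel 2 ≤ gaussKernel (max |c| |d|) := gaussKernel_le_of_abs_le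
    ((abs_of_nonneg ((abs_nonneg c).trans (le_max_left _ _))).le.trans hmax)
  calc d - c ≤ (d - c) * (Real.exp 2 * gaussKernel 2) :=
        le_mul_of_one_le_right (by linarith) hg2
    _ ≤ (d - c) * (Real.exp 2 * gaussKernel (max |c| |d|)) := by gcongr
    _ ≤ Real.exp 2 * ∫ u in c..d, gaussKernel u := by
        rw [mul_left_comm]
        exact mul_le_mul_of_nonneg_left (sub_mul_gaussKernel_le_integral hcd) he.le

lemma integral_abs_mul_gaussKernel_le_of_le_one {ℓ r : ℝ} (hℓr : ℓ ≤ r) (hsym : -ℓ ≤ r)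
    (hℓ : ℓ ≤ 1) :
    ∫ u in ℓ..r, |u| * gaussKernel u ≤
      ((∫ u, |u| * gaussKernel u) + 1) * Real.exp 2 * ∫ u in ℓ..r, gaussKernel u := by
  set B := ∫ u, |u| * gaussKernel u
  have hB : 0 ≤ B := integral_abs_mul_gaussKernel_nonneg
  have he : 0 < Real.exp 2 := Real.exp_pos 2
  rcases le_total (r - ℓ) 1 with hshort | hlong
  · have hJ : ∫ u in ℓ..r, |u| * gaussKernel u ≤ r - ℓ := by
      simpa using intervalIntegral.integral_mono_on (μ := volume) hℓr
        ((continuous_abs.mul continuous_gaussKernel).intervalIntegrable ℓ r)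
        intervalIntegrable_const fun u _ => abs_mul_gaussKernel_le_one u
    have hI := sub_le_exp_two_mul_integral_gaussKernel (by linarith) hℓr (by linarith)
    have hI0 : 0 ≤ ∫ u in ℓ..r, gaussKernel u :=
      intervalIntegral.integral_nonneg hℓr fun u _ => (gaussKernel_pos u).le
    nlinarith [mul_nonneg hB (mul_nonneg he.le hI0)]
  · -- a unit subinterval of `[ℓ, r]` inside `[-1, 2]`, where `gaussKernel ≥ e⁻²`
    have hsub : max ℓ (-1) + 1 ≤ r := by
      rcases le_total ℓ (-1) with h | h
      · rw [max_eq_right h]; linarith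
      · rw [max_eq_left h]; linarith
    have hc : -1 ≤ max ℓ (-1) ∧ max ℓ (-1) ≤ 1 :=
      ⟨le_max_right _ _, max_le hℓ (by norm_num)⟩
    have hI : 1 ≤ Real.exp 2 * ∫ u in ℓ..r, gaussKernel u :=
      calc (1 : ℝ) = max ℓ (-1) + 1 - max ℓ (-1) := by ring
        _ ≤ Real.exp 2 * ∫ u in max ℓ (-1)..max ℓ (-1) + 1, gaussKernel u :=
          sub_le_exp_two_mul_integral_gaussKernel (by linarith) (by linarith) (by linarith)
        _ ≤ Real.exp 2 * ∫ u in ℓ..r, gaussKernel u :=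
          mul_le_mul_of_nonneg_left (integral_gaussKernel_mono_interval (le_max_left ℓ (-1))
            (by linarith) hsub) he.le
    have hJ : ∫ u in ℓ..r, |u| * gaussKernel u ≤ B := by
      rw [intervalIntegral.integral_of_le hℓr]
      exact setIntegral_le_integral integrable_abs_mul_gaussKernel
        (Filter.Eventually.of_forall fun u => mul_nonneg (abs_nonneg u) (gaussKernel_pos u).le)
    nlinarith [mul_le_mul_of_nonneg_left hI hB]

lemma integral_mul_gaussKernel (a b : ℝ) :
    ∫ u in a..b, u * gaussKernel u = gaussKernel a - gaussKernel b := by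
  have := intervalIntegral.integral_eq_sub_of_hasDerivAt
    (f := -gaussKernel) (f' := fun u => u * gaussKernel u)
    (fun u _ => by simpa using (hasDerivAt_gaussKernel u).neg)
    ((continuous_id.mul continuous_gaussKernel).intervalIntegrable a b)
  rw [this, Pi.neg_apply, Pi.neg_apply]; ring

lemma integral_abs_mul_gaussKernel_le_of_one_le {ℓ r : ℝ} (hℓr : ℓ ≤ r) (hℓ : 1 ≤ ℓ) :
    ∫ u in ℓ..r, |u| * gaussKernel u ≤ 2 * Real.exp 2 * ℓ * ∫ u in ℓ..r, gaussKernel u := by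
  have he : 1 ≤ Real.exp 2 := Real.one_le_exp (by norm_num)
  have hI0 : 0 ≤ ∫ u in ℓ..r, gaussKernel u :=
    intervalIntegral.integral_nonneg hℓr fun u _ => (gaussKernel_pos u).le
  have hJ : ∫ u in ℓ..r, |u| * gaussKernel u = ∫ u in ℓ..r, u * gaussKernel u := by
    refine intervalIntegral.integral_congr fun u hu => ?_
    rw [uIcc_of_le hℓr] at hu
    simp only [abs_of_nonneg (by linarith [hu.1] : (0:ℝ) ≤ u)]
  rw [hJ]
  rcases le_total (r - ℓ) 1 with hshort | hlong
  · have hJr : ∫ u in ℓ..r, u * gaussKernel u ≤ r * ∫ u in ℓ..r, gaussKernel u := by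
      rw [← intervalIntegral.integral_const_mul]
      exact intervalIntegral.integral_mono_on hℓr
        ((continuous_id.mul continuous_gaussKernel).intervalIntegrable ℓ r)
        ((continuous_const.mul continuous_gaussKernel).intervalIntegrable ℓ r)
        fun u hu => mul_le_mul_of_nonneg_right hu.2 (gaussKernel_pos u).le
    nlinarith [mul_le_mul_of_nonneg_right he (mul_nonneg (by linarith : (0:ℝ) ≤ ℓ) hI0)]
  · -- the Gaussian loses at most a factor `e²` over `[ℓ, ℓ + 1/ℓ] ⊆ [ℓ, r]`
    set v := ℓ⁻¹
    have hv : 0 < v ∧ v ≤ 1 ∧ ℓ * v = 1 :=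
      ⟨by positivity, inv_le_one_of_one_le₀ hℓ, mul_inv_cancel₀ (by positivity)⟩
    have hdrop : gaussKernel ℓ ≤ Real.exp 2 * gaussKernel (ℓ + v) := by
      simp only [gaussKernel, ← Real.exp_add]
      exact Real.exp_le_exp.2 (by nlinarith)
    have hI : v * gaussKernel (ℓ + v) ≤ ∫ u in ℓ..r, gaussKernel u := by
      have h := sub_mul_gaussKernel_le_integral (c := ℓ) (d := ℓ + v) (by linarith)
      rw [abs_of_pos (by linarith), abs_of_pos (by linarith), max_eq_right (by linarith),
        add_sub_cancel_left] at h
      exact h.trans (integral_gaussKernel_mono_interval le_rfl (by linarith) (by linarith))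
    calc ∫ u in ℓ..r, u * gaussKernel u ≤ gaussKernel ℓ := by
          rw [integral_mul_gaussKernel]; linarith [gaussKernel_pos r]
      _ ≤ Real.exp 2 * ℓ * (v * gaussKernel (ℓ + v)) := by
          rw [← mul_assoc, mul_assoc _ ℓ, hv.2.2, mul_one]; exact hdrop
      _ ≤ 2 * Real.exp 2 * ℓ * ∫ u in ℓ..r, gaussKernel u := by
          have := mul_le_mul_of_nonneg_left hI (by positivity : 0 ≤ Real.exp 2 * ℓ)
          nlinarith [mul_nonneg (mul_nonneg (Real.exp_pos 2).le (by linarith : (0:ℝ) ≤ ℓ)) hI0]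

def gaussRatioConst : ℝ := ((∫ u, |u| * gaussKernel u) + 2) * Real.exp 2

lemma gaussRatioConst_pos : 0 < gaussRatioConst := by
  have := integral_abs_mul_gaussKernel_nonneg
  unfold gaussRatioConst
  positivity

lemma integral_abs_mul_gaussKernel_le_of_neg_le {ℓ r : ℝ} (hℓr : ℓ ≤ r) (hsym : -ℓ ≤ r) :
    ∫ u in ℓ..r, |u| * gaussKernel u ≤
      gaussRatioConst * max ℓ 1 * ∫ u in ℓ..r, gaussKernel u := by
  have hB := integral_abs_mul_gaussKernel_nonneg
  have he := Real.exp_pos 2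
  have hI0 : 0 ≤ ∫ u in ℓ..r, gaussKernel u :=
    intervalIntegral.integral_nonneg hℓr fun u _ => (gaussKernel_pos u).le
  unfold gaussRatioConst
  rcases le_total ℓ 1 with hℓ | hℓ
  · rw [max_eq_right hℓ, mul_one]
    refine (integral_abs_mul_gaussKernel_le_of_le_one hℓr hsym hℓ).trans ?_
    gcongr; linarith
  · rw [max_eq_left hℓ]
    refine (integral_abs_mul_gaussKernel_le_of_one_le hℓr hℓ).trans ?_
    gcongr; linarith

lemma integral_abs_mul_gaussKernel_le {ℓ r : ℝ} (hℓr : ℓ ≤ r) :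
    ∫ u in ℓ..r, |u| * gaussKernel u ≤
      gaussRatioConst * max (max ℓ (-r)) 1 * ∫ u in ℓ..r, gaussKernel u := by
  rcases le_total (-ℓ) r with hsym | hsym
  · rw [max_eq_left (by linarith : -r ≤ ℓ)]
    exact integral_abs_mul_gaussKernel_le_of_neg_le hℓr hsym
  · have hreflect (F : ℝ → ℝ) (hF : ∀ u, F (-u) = F u) :
        ∫ u in ℓ..r, F u = ∫ u in -r..-ℓ, F u := by
      simp_rw [← intervalIntegral.integral_comp_neg, hF]
    rw [hreflect _ fun u => by rw [abs_neg, gaussKernel_neg],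
      hreflect _ gaussKernel_neg, max_eq_right (by linarith : ℓ ≤ -r)]
    exact integral_abs_mul_gaussKernel_le_of_neg_le (by linarith) (by linarith)

lemma setIntegral_comp_affine_Icc (F : ℝ → ℝ) {μ σ : ℝ} (hμ : 0 < μ) (hσ : 0 < σ) (a : ℝ) :
    ∫ r in Icc (-1 : ℝ) 1, F ((a - μ * r) / σ) =
      σ / μ * ∫ u in a / σ - μ / σ..a / σ + μ / σ, F u := by
  rw [integral_Icc_eq_integral_Ioc, ← intervalIntegral.integral_of_le (by norm_num)]
  have h := intervalIntegral.integral_comp_sub_mul F (a := -1) (b := 1)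
    (div_pos hμ hσ).ne' (a / σ)
  simp only [mul_one, mul_neg, sub_neg_eq_add, smul_eq_mul, inv_div] at h
  rw [← h]
  congr 1; ext r; congr 1; ring

lemma setIntegral_abs_mul_gaussKernel_affine_le {μ σ : ℝ} (hμ : 0 < μ) (hσ : 0 < σ) (a : ℝ) :
    ∫ r in Icc (-1 : ℝ) 1, |(a - μ * r) / σ| * gaussKernel ((a - μ * r) / σ) ≤
      gaussRatioConst * max ((|a| - μ) / σ) 1 *
        ∫ r in Icc (-1 : ℝ) 1, gaussKernel ((a - μ * r) / σ) := by
  rw [setIntegral_comp_affine_Icc (fun u => |u| * gaussKernel u) hμ hσ,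
    setIntegral_comp_affine_Icc gaussKernel hμ hσ]
  have hend : max (a / σ - μ / σ) (-(a / σ + μ / σ)) = (|a| - μ) / σ := by
    rw [neg_add, ← sub_eq_add_neg, max_sub_sub_right, ← neg_div, max_div_div_right hσ.le,
      ← abs_eq_max_neg, sub_div]
  have h := integral_abs_mul_gaussKernel_le (ℓ := a / σ - μ / σ) (r := a / σ + μ / σ)
    (by linarith [div_pos hμ hσ])
  rw [hend] at h
  have := div_pos hσ hμ
  calc σ / μ * ∫ u in a / σ - μ / σ..a / σ + μ / σ, |u| * gaussKernel u
      ≤ σ / μ * (gaussRatioConst * max ((|a| - μ) / σ) 1 *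
          ∫ u in a / σ - μ / σ..a / σ + μ / σ, gaussKernel u) := by gcongr
    _ = _ := by ring

lemma hasDerivAt_integral_mul_gaussKernel {E : Type*} [MeasurableSpace E] {ν : Measure E}
    {h a : E → ℝ} (hh : Integrable h ν) (ha : AEStronglyMeasurable a ν) {σ : ℝ} (hσ : 0 < σ)
    (s₀ : ℝ) :
    HasDerivAt (fun s => ∫ y, h y * gaussKernel ((s - a y) / σ) ∂ν)
      (∫ y, h y * (-((s₀ - a y) / σ * gaussKernel ((s₀ - a y) / σ)) / σ) ∂ν) s₀ := by
  have hderiv (y : E) (s : ℝ) : HasDerivAt (fun s => h y * gaussKernel ((s - a y) / σ))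
      (h y * (-((s - a y) / σ * gaussKernel ((s - a y) / σ)) / σ)) s := by
    have := ((hasDerivAt_gaussKernel _).comp s
      (((hasDerivAt_id s).sub_const (a y)).div_const σ)).const_mul (h y)
    exact this.congr_deriv (by simp only [id]; ring)
  have hcomp {φ : ℝ → ℝ} (hφ : Continuous φ) (s : ℝ) :
      AEStronglyMeasurable (fun y => φ ((s - a y) / σ)) ν :=
    (by fun_prop : Continuous fun v => φ ((s - v) / σ)).comp_aestronglyMeasurable ha
  refine (hasDerivAt_integral_of_dominated_loc_of_deriv_le (bound := fun y => |h y| * σ⁻¹)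
    (F := fun s y => h y * gaussKernel ((s - a y) / σ))
    (F' := fun s y => h y * (-((s - a y) / σ * gaussKernel ((s - a y) / σ)) / σ))
    Filter.univ_mem
    (Filter.Eventually.of_forall fun s => hh.aestronglyMeasurable.mul
      (hcomp continuous_gaussKernel s))
    ?_ (hh.aestronglyMeasurable.mul
      (hcomp (φ := fun u => -(u * gaussKernel u) / σ) (by fun_prop) s₀))
    ?_ (hh.norm.mul_const σ⁻¹) (Filter.Eventually.of_forall fun y s _ => hderiv y s)).2
  · refine hh.mul_bdd (hcomp continuous_gaussKernel s₀) (c := 1)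
      (Filter.Eventually.of_forall fun y => ?_)
    rw [Real.norm_of_nonneg (gaussKernel_pos _).le]
    exact gaussKernel_le_one _
  · refine Filter.Eventually.of_forall fun y s _ => ?_
    rw [Real.norm_eq_abs, abs_mul, abs_div, abs_neg, abs_mul, abs_of_pos hσ,
      abs_of_pos (gaussKernel_pos _), div_eq_mul_inv]
    gcongr
    simpa using mul_le_mul_of_nonneg_right (abs_mul_gaussKernel_le_one _) (inv_nonneg.2 hσ.le)

def gaussProd {D : ℕ} (σ μ : ℝ) (x y : Fin D → ℝ) : ℝ :=
  ∏ j, gaussKernel ((x j - μ * y j) / σ)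

lemma gaussD_sub_smul (D : ℕ) (σ μ : ℝ) (x y : Fin D → ℝ) :
    gaussD D σ (x - μ • y) = (2 * Real.pi * σ ^ 2) ^ (-(D : ℝ) / 2) * gaussProd σ μ x y := by
  simp only [gaussD, gaussProd, gaussKernel, ← Real.exp_sum, Pi.sub_apply, Pi.smul_apply,
    smul_eq_mul]
  congr 2
  rw [neg_div, Finset.sum_div, ← Finset.sum_neg_distrib]
  exact Finset.sum_congr rfl fun j _ => by ring

lemma fwdDen_eq (D : ℕ) (α : ℝ → ℝ) (p₀ : (Fin D → ℝ) → ℝ) (t : ℝ) (x : Fin D → ℝ) :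
    fwdDen D α p₀ t x = (2 * Real.pi * sigmaT α t ^ 2) ^ (-(D : ℝ) / 2) *
      ∫ y in cube D, p₀ y * gaussProd (sigmaT α t) (muT α t) x y := by
  simp_rw [fwdDen, gaussD_sub_smul, mul_left_comm (p₀ _)]
  exact integral_const_mul _ _

lemma prod_apply_update {ι β M : Type*} [Fintype ι] [DecidableEq ι] [CommMonoid M]
    (T : ι → β → M) (F : ι → β) (i : ι) (b : β) :
    ∏ j, T j (Function.update F i b j) = T i b * ∏ j ∈ Finset.univ \ {i}, T j (F j) := by
  rw [Finset.prod_congr rfl fun j _ => Function.apply_update T F i b j,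
    Finset.prod_update_of_mem (Finset.mem_univ i)]

lemma hasDerivAt_integral_mul_gaussProd_update {D : ℕ} {ν : Measure (Fin D → ℝ)}
    {w : (Fin D → ℝ) → ℝ} (hw : Integrable w ν) {σ : ℝ} (hσ : 0 < σ) (μ : ℝ)
    (x : Fin D → ℝ) (i : Fin D) :
    HasDerivAt (fun s => ∫ y, w y * gaussProd σ μ (Function.update x i s) y ∂ν)
      (-(∫ y, w y * ((x i - μ * y i) / σ * gaussProd σ μ x y) ∂ν) / σ) (x i) := by
  set h : (Fin D → ℝ) → ℝ :=
    fun y => w y * ∏ j ∈ Finset.univ \ {i}, gaussKernel ((x j - μ * y j) / σ)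
  have hsplit (s : ℝ) (y : Fin D → ℝ) :
      w y * gaussProd σ μ (Function.update x i s) y = h y * gaussKernel ((s - μ * y i) / σ) := by
    rw [gaussProd, prod_apply_update (fun j v => gaussKernel ((v - μ * y j) / σ))]
    ring
  have hh : Integrable h ν := by
    refine hw.mul_bdd (c := 1) (Continuous.aestronglyMeasurable (by fun_prop))
      (Filter.Eventually.of_forall fun y => ?_)
    rw [Real.norm_of_nonneg (Finset.prod_nonneg fun j _ => (gaussKernel_pos _).le)]
    exact Finset.prod_le_one (fun j _ => (gaussKernel_pos _).le) fun j _ => gaussKernel_le_one _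
  have hderiv := hasDerivAt_integral_mul_gaussKernel hh (a := fun y => μ * y i)
    (Continuous.aestronglyMeasurable (by fun_prop)) hσ (x i)
  simp_rw [hsplit]
  convert hderiv using 1
  rw [← integral_neg, ← integral_div]
  congr 1; ext y
  have hx := hsplit (x i) y
  rw [Function.update_eq_self] at hx
  rw [mul_left_comm, hx]
  ring

lemma score_eq {D : ℕ} {α : ℝ → ℝ} {p₀ : (Fin D → ℝ) → ℝ} {t : ℝ} (x : Fin D → ℝ) (i : Fin D)
    (hp₀ : IntegrableOn p₀ (cube D)) (hσ : 0 < sigmaT α t)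
    (hP : ∫ y in cube D, p₀ y * gaussProd (sigmaT α t) (muT α t) x y ≠ 0) :
    score D α p₀ x t i =
      -(∫ y in cube D, p₀ y * ((x i - muT α t * y i) / sigmaT α t *
          gaussProd (sigmaT α t) (muT α t) x y)) / sigmaT α t /
        ∫ y in cube D, p₀ y * gaussProd (sigmaT α t) (muT α t) x y := by
  set c := (2 * Real.pi * sigmaT α t ^ 2) ^ (-(D : ℝ) / 2)
  have hc : c ≠ 0 := by positivity
  have hfun : (fun s => Real.log (fwdDen D α p₀ t (Function.update x i s))) = fun s =>
      Real.log (c * ∫ y in cube D,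
        p₀ y * gaussProd (sigmaT α t) (muT α t) (Function.update x i s) y) := by
    simp only [fwdDen_eq, c]
  have hderiv := (hasDerivAt_integral_mul_gaussProd_update hp₀ hσ (muT α t) x i).const_mul c
  show deriv (fun s => Real.log (fwdDen D α p₀ t (Function.update x i s))) (x i) = _
  rw [hfun, (hderiv.log (by rw [Function.update_eq_self]; exact mul_ne_zero hc hP)).deriv,
    Function.update_eq_self]
  field_simp

lemma integral_cube_prod {D : ℕ} (f : Fin D → ℝ → ℝ) :
    ∫ y in cube D, ∏ j, f j (y j) = ∏ j, ∫ r in Icc (-1 : ℝ) 1, f j r := by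
  rw [cube, ← pi_univ_Icc, volume_pi, Measure.restrict_pi_pi]
  exact integral_fintype_prod_eq_prod f

lemma mul_prod_le_integral_cube_mul_prod {D : ℕ} {w : (Fin D → ℝ) → ℝ} {τ : ℝ}
    (hw : IntegrableOn w (cube D)) (hτ : ∀ y ∈ cube D, τ ≤ w y) {f : Fin D → ℝ → ℝ}
    (hf : ∀ j, Continuous (f j)) (hf0 : ∀ j r, 0 ≤ f j r) :
    τ * ∏ j, ∫ r in Icc (-1 : ℝ) 1, f j r ≤ ∫ y in cube D, w y * ∏ j, f j (y j) := by
  have hcont : Continuous fun y : Fin D → ℝ => ∏ j, f j (y j) := by fun_prop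
  rw [← integral_cube_prod, ← integral_const_mul]
  exact setIntegral_mono_on ((hcont.const_mul τ).continuousOn.integrableOn_compact isCompact_Icc)
    (hw.mul_continuousOn hcont.continuousOn isCompact_Icc) measurableSet_Icc fun y hy =>
      mul_le_mul_of_nonneg_right (hτ y hy) (Finset.prod_nonneg fun j _ => hf0 j _)

lemma integral_cube_mul_prod_le {D : ℕ} {w : (Fin D → ℝ) → ℝ} {K : ℝ}
    (hw : IntegrableOn w (cube D)) (hK : ∀ y ∈ cube D, w y ≤ K) {f : Fin D → ℝ → ℝ}
    (hf : ∀ j, Continuous (f j)) (hf0 : ∀ j r, 0 ≤ f j r) :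
    ∫ y in cube D, w y * ∏ j, f j (y j) ≤ K * ∏ j, ∫ r in Icc (-1 : ℝ) 1, f j r := by
  have hcont : Continuous fun y : Fin D → ℝ => ∏ j, f j (y j) := by fun_prop
  rw [← integral_cube_prod, ← integral_const_mul]
  exact setIntegral_mono_on (hw.mul_continuousOn hcont.continuousOn isCompact_Icc)
    ((hcont.const_mul K).continuousOn.integrableOn_compact isCompact_Icc) measurableSet_Icc
    fun y hy => mul_le_mul_of_nonneg_right (hK y hy) (Finset.prod_nonneg fun j _ => hf0 j _)

lemma setIntegral_Icc_pos {f : ℝ → ℝ} (hf : Continuous f) (hf0 : ∀ r, 0 < f r) :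
    0 < ∫ r in Icc (-1 : ℝ) 1, f r := by
  rw [integral_Icc_eq_integral_Ioc, ← intervalIntegral.integral_of_le (by norm_num)]
  exact intervalIntegral.intervalIntegral_pos_of_pos_on (hf.intervalIntegrable _ _)
    (fun r _ => hf0 r) (by norm_num)

lemma abs_integral_mul_gaussProd_le {D : ℕ} {w : (Fin D → ℝ) → ℝ} {K : ℝ}
    (hw : IntegrableOn w (cube D)) (hwK : ∀ y ∈ cube D, 0 ≤ w y ∧ w y ≤ K) (σ μ : ℝ)
    (x : Fin D → ℝ) (i : Fin D) :
    |∫ y in cube D, w y * ((x i - μ * y i) / σ * gaussProd σ μ x y)| ≤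
      K * (∫ r in Icc (-1 : ℝ) 1, |(x i - μ * r) / σ| * gaussKernel ((x i - μ * r) / σ)) *
        ∏ j ∈ Finset.univ \ {i}, ∫ r in Icc (-1 : ℝ) 1, gaussKernel ((x j - μ * r) / σ) := by
  set k : Fin D → ℝ → ℝ := fun j r => gaussKernel ((x j - μ * r) / σ)
  set φ : ℝ → ℝ := fun r => |(x i - μ * r) / σ| * k i r
  have hk0 (j : Fin D) (r : ℝ) : 0 ≤ k j r := (gaussKernel_pos _).le
  have habs : EqOn (fun y => |w y * ((x i - μ * y i) / σ * gaussProd σ μ x y)|)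
      (fun y => w y * ∏ j, Function.update k i φ j (y j)) (cube D) := fun y hy => by
    dsimp only
    rw [prod_apply_update (fun j f => f (y j)) k i φ, gaussProd,
      Finset.prod_eq_mul_prod_sdiff_singleton i _ (by simp), abs_mul, abs_mul,
      abs_of_nonneg (hwK y hy).1,
      abs_of_nonneg (mul_nonneg (hk0 i _) (Finset.prod_nonneg fun j _ => hk0 j _))]
    simp only [φ, k]; ring
  have hupd (j : Fin D) : Continuous (Function.update k i φ j) ∧
      ∀ r, 0 ≤ Function.update k i φ j r := by
    rcases eq_or_ne j i with rfl | hj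
    · simpa [φ] using ⟨by fun_prop, fun r => mul_nonneg (abs_nonneg _) (hk0 j r)⟩
    · simpa [hj, k] using ⟨by fun_prop, fun r => (gaussKernel_pos _).le⟩
  calc _ ≤ ∫ y in cube D, |w y * ((x i - μ * y i) / σ * gaussProd σ μ x y)| :=
        abs_integral_le_integral_abs
    _ = ∫ y in cube D, w y * ∏ j, Function.update k i φ j (y j) :=
        setIntegral_congr_fun measurableSet_Icc habs
    _ ≤ K * ∏ j, ∫ r in Icc (-1 : ℝ) 1, Function.update k i φ j r :=
        integral_cube_mul_prod_le hw (fun y hy => (hwK y hy).2) (fun j => (hupd j).1)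
          fun j => (hupd j).2
    _ = _ := by
        rw [prod_apply_update (fun _ f => ∫ r in Icc (-1 : ℝ) 1, f r) k i φ, mul_assoc]

lemma abs_score_le {D : ℕ} {α : ℝ → ℝ} {p₀ : (Fin D → ℝ) → ℝ} {t K τ₁ : ℝ} (x : Fin D → ℝ)
    (i : Fin D) (hp₀ : IntegrableOn p₀ (cube D)) (hbd : ∀ y ∈ cube D, τ₁ ≤ p₀ y ∧ p₀ y ≤ K)
    (hτ₁ : 0 < τ₁) (hμ : 0 < muT α t) (hσ : 0 < sigmaT α t) :
    |score D α p₀ x t i| ≤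
      K * gaussRatioConst / τ₁ / sigmaT α t * max ((|x i| - muT α t) / sigmaT α t) 1 := by
  set μ := muT α t
  set σ := sigmaT α t
  set I : Fin D → ℝ := fun j => ∫ r in Icc (-1 : ℝ) 1, gaussKernel ((x j - μ * r) / σ)
  set Q := ∏ j ∈ Finset.univ \ {i}, I j
  set M := max ((|x i| - μ) / σ) 1
  have hI (j : Fin D) : 0 < I j := setIntegral_Icc_pos (by fun_prop) fun r => gaussKernel_pos _
  have hQ : 0 < Q := Finset.prod_pos fun j _ => hI j
  have hden : τ₁ * (I i * Q) ≤ ∫ y in cube D, p₀ y * gaussProd σ μ x y := by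
    rw [show I i * Q = ∏ j, I j from (Finset.prod_eq_mul_prod_sdiff_singleton i I (by simp)).symm]
    exact mul_prod_le_integral_cube_mul_prod hp₀ (fun y hy => (hbd y hy).1) (fun j => by fun_prop)
      fun j r => (gaussKernel_pos _).le
  have hP : 0 < ∫ y in cube D, p₀ y * gaussProd σ μ x y :=
    (mul_pos hτ₁ (mul_pos (hI i) hQ)).trans_le hden
  have hnum := abs_integral_mul_gaussProd_le hp₀
    (fun y hy => ⟨hτ₁.le.trans (hbd y hy).1, (hbd y hy).2⟩) σ μ x i
  have h1d := setIntegral_abs_mul_gaussKernel_affine_le hμ hσ (x i)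
  have hK : 0 ≤ K := by
    have h0 : (0 : Fin D → ℝ) ∈ cube D := ⟨fun _ => by norm_num, fun _ => by norm_num⟩
    exact hτ₁.le.trans ((hbd 0 h0).1.trans (hbd 0 h0).2)
  have hM : 0 ≤ M := zero_le_one.trans (le_max_right _ _)
  have hC := gaussRatioConst_pos
  rw [score_eq x i hp₀ hσ hP.ne', abs_div, abs_div, abs_neg, abs_of_pos hσ, abs_of_pos hP,
    div_div, div_le_iff₀ (by positivity)]
  calc _ ≤ K * (gaussRatioConst * M * I i) * Q := hnum.trans (by gcongr)
    _ = K * gaussRatioConst / τ₁ / σ * M * (σ * (τ₁ * (I i * Q))) := by field_simp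
    _ ≤ K * gaussRatioConst / τ₁ / σ * M * (σ * ∫ y in cube D, p₀ y * gaussProd σ μ x y) := by
        gcongr

lemma muT_pos (α : ℝ → ℝ) (t : ℝ) : 0 < muT α t := Real.exp_pos _

lemma muT_lt_one {α : ℝ → ℝ} {τlo τhi t : ℝ} (hα : Measurable α)
    (hbd : ∀ s, 0 ≤ s → τlo ≤ α s ∧ α s ≤ τhi) (hτlo : 0 < τlo) (ht : 0 < t) : muT α t < 1 := by
  have hint : IntegrableOn α (Ioc 0 t) :=
    Measure.integrableOn_of_bounded (M := τhi) measure_Ioc_lt_top.ne hα.aestronglyMeasurable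
      ((ae_restrict_mem measurableSet_Ioc).mono fun s hs => by
        rw [Real.norm_eq_abs, abs_le]
        constructor <;> linarith [hbd s hs.1.le])
  have hpos : 0 < ∫ s in Ioc 0 t, α s := by
    rw [← intervalIntegral.integral_of_le ht.le]
    exact intervalIntegral.intervalIntegral_pos_of_pos_on
      ((intervalIntegrable_iff_integrableOn_Ioc_of_le ht.le).2 hint)
      (fun s hs => hτlo.trans_le (hbd s hs.1.le).1) ht
  exact Real.exp_lt_one_iff.2 (neg_neg_of_pos hpos)

lemma sigmaT_pos {α : ℝ → ℝ} {t : ℝ} (h : muT α t < 1) : 0 < sigmaT α t :=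
  Real.sqrt_pos.2 (by nlinarith [muT_pos α t])

lemma sqrt_sum_sq_le {ι : Type*} [Fintype ι] {v : ι → ℝ} {M : ℝ} (hM : 0 ≤ M)
    (h : ∀ i, |v i| ≤ M) : √(∑ i, v i ^ 2) ≤ √(Fintype.card ι) * M := by
  calc √(∑ i, v i ^ 2) ≤ √(∑ _i : ι, M ^ 2) :=
        Real.sqrt_le_sqrt (Finset.sum_le_sum fun i _ => sq_le_sq.2 ((h i).trans (le_abs_self M)))
    _ = √(Fintype.card ι) * M := by
        rw [Finset.sum_const, Finset.card_univ, nsmul_eq_mul, Real.sqrt_mul (Nat.cast_nonneg _),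
          Real.sqrt_sq hM]

theorem statement_17_general
    (D : ℕ) (hD : 0 < D) (K τ₁ τlo τhi : ℝ)
    (hK : 0 < K) (hτ₁ : 0 < τ₁) (hτlo : 0 < τlo) :
    ∃ C : ℝ, 0 < C ∧
      ∀ (p₀ : (Fin D → ℝ) → ℝ) (α : ℝ → ℝ),
        ForwardHyp D τlo τhi α p₀ →
        (∀ x ∈ cube D, τ₁ ≤ p₀ x ∧ p₀ x ≤ K) →
        ∀ (x : Fin D → ℝ) (t : ℝ), 0 < t →
          Real.sqrt (∑ i, score D α p₀ x t i ^ 2) ≤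
            C / sigmaT α t * max ((‖x‖ - muT α t) / sigmaT α t) 1 := by
  have hsD : 0 < √(D : ℝ) := Real.sqrt_pos.2 (Nat.cast_pos.2 hD)
  have hC := gaussRatioConst_pos
  refine ⟨√D * K * gaussRatioConst / τ₁, by positivity, ?_⟩
  rintro p₀ α ⟨-, -, -, hmass, hα, hαbd⟩ hbd x t ht
  have hσ := sigmaT_pos (muT_lt_one hα hαbd hτlo ht)
  have hp₀ : IntegrableOn p₀ (cube D) :=
    (Integrable.of_integral_ne_zero (by rw [hmass]; exact one_ne_zero)).integrableOn
  have hcoord (i : Fin D) : |score D α p₀ x t i| ≤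
      K * gaussRatioConst / τ₁ / sigmaT α t * max ((‖x‖ - muT α t) / sigmaT α t) 1 := by
    refine (abs_score_le x i hp₀ hbd hτ₁ (muT_pos α t) hσ).trans ?_
    have := norm_le_pi_norm x i
    rw [Real.norm_eq_abs] at this
    gcongr
  calc _ ≤ √(Fintype.card (Fin D)) *
        (K * gaussRatioConst / τ₁ / sigmaT α t * max ((‖x‖ - muT α t) / sigmaT α t) 1) :=
        sqrt_sum_sq_le (by positivity) hcoord
    _ = _ := by rw [Fintype.card_fin]; ring

/-- Lemma A.2 of the paper: bound on the score function
`‖∇ₓ log p_t(x)‖₂ ≤ (C/σ_t) max((‖x‖_∞ - μ_t)/σ_t, 1)`. -/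
theorem statement_17
    (D : ℕ) (hD : 0 < D) (K τ₁ τlo τhi : ℝ)
    (hK : 0 < K) (hτ₁ : 0 < τ₁) (hτlo : 0 < τlo) (hττ : τlo ≤ τhi) :
    ∃ C : ℝ, 0 < C ∧
      ∀ (p₀ : (Fin D → ℝ) → ℝ) (α : ℝ → ℝ),
        ForwardHyp D τlo τhi α p₀ →
        (∀ x ∈ cube D, τ₁ ≤ p₀ x ∧ p₀ x ≤ K) →
        ∀ (x : Fin D → ℝ) (t : ℝ), 0 < t →
          Real.sqrt (∑ i, score D α p₀ x t i ^ 2) ≤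
            C / sigmaT α t * max ((‖x‖ - muT α t) / sigmaT α t) 1 :=
  statement_17_general D hD K τ₁ τlo τhi hK hτ₁ hτlo

end DMpaper

end
end

section
/- Let D ∈ ℕ and let P₀ be a Borel probability measure on ℝ^D with P₀([−1,1]^D) = 1. Let μ ∈ (0,1) with μ² ≤ 1/2 and σ = √(1 − μ²), and define q(x) = ∫ φ_σ(x − μy) dP₀(y), which is the density of μY + σZ where Y ∼ P₀ and Z ∼ N(0, I_D) are independent. Then the Kullback–Leibler divergence of q from the standard Gaussian density φ₁ on ℝ^D satisfies KL(q, φ₁) = ∫_{ℝ^D} q(x) log( q(x)/φ₁(x) ) dx ≤ (5D/4) μ². -/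
/-! By convexity of `t ↦ t log (t / c)` and Jensen's inequality in the mixing variable, the
divergence of the mixture `q = ∫ φ_σ(· - μy) dP₀(y)` from `φ₁` is at most the `P₀`-average of the
Gaussian divergences `KL(N(μy, σ²I), N(0, I)) = D/2 (σ² - 1 - log σ²) + μ² |y|² / 2`, computed from
second moments that factor over the coordinates into one-dimensional Gaussian moments. With
`σ² = 1 - μ²`, `|y|² ≤ D` on the cube and `-log (1 - μ²) ≤ 2μ²` for `μ² ≤ 1/2`, each divergence
is at most `D μ²`. -/

open MeasureTheory
open scoped BigOperators ENNReal NNReal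

noncomputable section

namespace DMpaper

attribute [local instance] Classical.propDecidable

open Real ProbabilityTheory

lemma mul_log_div_eq (t : ℝ) {c : ℝ} (hc : c ≠ 0) : t * log (t / c) = t * log t - log c * t := by
  rcases eq_or_ne t 0 with rfl | ht
  · simp
  · rw [log_div ht hc]; ring

lemma continuous_mul_log_div {c : ℝ} (hc : c ≠ 0) : Continuous fun t : ℝ => t * log (t / c) := by
  simp_rw [mul_log_div_eq _ hc]
  exact continuous_mul_log.sub (continuous_const_mul _)

lemma convexOn_mul_log_div {c : ℝ} (hc : c ≠ 0) :
    ConvexOn ℝ (Set.Ici 0) fun t : ℝ => t * log (t / c) := by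
  simp_rw [mul_log_div_eq _ hc]
  exact convexOn_mul_log.sub ((LinearMap.mul ℝ ℝ (log c)).concaveOn (convex_Ici 0))

lemma integral_mul_log_integral_div_le {Ω : Type*} [MeasurableSpace Ω] {P : Measure Ω}
    [IsProbabilityMeasure P] {u : Ω → ℝ} {M c : ℝ} (hu : AEStronglyMeasurable u P)
    (hu0 : ∀ ω, 0 ≤ u ω) (huM : ∀ ω, u ω ≤ M) (hc : c ≠ 0) :
    (∫ ω, u ω ∂P) * log ((∫ ω, u ω ∂P) / c) ≤ ∫ ω, u ω * log (u ω / c) ∂P := by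
  have hbdd : ∀ ω, ‖u ω‖ ≤ M := fun ω => (Real.norm_of_nonneg (hu0 ω)).trans_le (huM ω)
  obtain ⟨C, hC⟩ := isCompact_Icc.exists_bound_of_continuousOn
    (continuous_mul_log_div hc).continuousOn (s := Set.Icc 0 M)
  refine (convexOn_mul_log_div hc).map_integral_le (continuous_mul_log_div hc).continuousOn
    isClosed_Ici (ae_of_all _ hu0) (.of_bound hu M (ae_of_all _ hbdd)) (.of_bound ?_ C ?_)
  · exact (continuous_mul_log_div hc).comp_aestronglyMeasurable hu
  · exact ae_of_all _ fun ω => hC _ ⟨hu0 ω, huM ω⟩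

open Function in
lemma integral_mixture_mul_log_div_le {X Y : Type*} [MeasurableSpace X]
    [MeasurableSpace Y] {ν : Measure X} [SFinite ν] {P : Measure Y} [IsProbabilityMeasure P]
    {k : X → Y → ℝ} {c : X → ℝ} {M : ℝ} (hk : ∀ x, AEStronglyMeasurable (k x) P)
    (hk0 : ∀ x y, 0 ≤ k x y) (hkM : ∀ x y, k x y ≤ M) (hc : ∀ x, c x ≠ 0)
    (hmix : Integrable (fun x => (∫ y, k x y ∂P) * log ((∫ y, k x y ∂P) / c x)) ν)
    (hF : Integrable (uncurry fun x y => k x y * log (k x y / c x)) (ν.prod P)) :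
    ∫ x, (∫ y, k x y ∂P) * log ((∫ y, k x y ∂P) / c x) ∂ν ≤
      ∫ y, ∫ x, k x y * log (k x y / c x) ∂ν ∂P :=
  calc _ ≤ ∫ x, ∫ y, k x y * log (k x y / c x) ∂P ∂ν :=
        integral_mono hmix hF.integral_prod_left
          fun x => integral_mul_log_integral_div_le (hk x) (hk0 x) (hkM x) (hc x)
    _ = _ := integral_integral_swap hF

lemma integral_gaussianPDFReal_mul_sq (m : ℝ) {v : NNReal} (hv : v ≠ 0) :
    ∫ t, gaussianPDFReal m v t * t ^ 2 = v + m ^ 2 := by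
  have hvar := variance_eq_sub (memLp_id_gaussianReal (μ := m) (v := v) 2)
  simp only [variance_id_gaussianReal, Pi.pow_apply, id, integral_id_gaussianReal] at hvar
  rw [integral_gaussianReal_eq_integral_smul hv] at hvar
  simp only [smul_eq_mul] at hvar
  linarith

lemma integrable_gaussianPDFReal_mul_sq (m : ℝ) {v : NNReal} (hv : v ≠ 0) :
    Integrable fun t => gaussianPDFReal m v t * t ^ 2 :=
  -- a non-integrable function would have integral `0`
  .of_integral_ne_zero <| by
    rw [integral_gaussianPDFReal_mul_sq m hv]
    positivity

section ProductDensity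

variable {ι : Type*} [Fintype ι] [DecidableEq ι] (p : ι → ℝ → ℝ) (j : ι) (f : ℝ → ℝ)

lemma prod_mul_comp_eval_eq_prod_update (x : ι → ℝ) :
    (∏ i, p i (x i)) * f (x j) = ∏ i, Function.update p j (fun t => p j t * f t) i (x i) := by
  rw [← Finset.mul_prod_erase _ _ (Finset.mem_univ j),
    ← Finset.mul_prod_erase _ _ (Finset.mem_univ j)]
  simp only [Function.update_self]
  rw [mul_right_comm]
  congr 1
  exact Finset.prod_congr rfl fun i hi => by rw [Function.update_of_ne (Finset.ne_of_mem_erase hi)]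

lemma integrable_prod_mul_comp_eval (hp : ∀ i, Integrable (p i))
    (hf : Integrable fun t => p j t * f t) :
    Integrable fun x : ι → ℝ => (∏ i, p i (x i)) * f (x j) := by
  simp_rw [prod_mul_comp_eval_eq_prod_update]
  refine Integrable.fintype_prod fun i => ?_
  rcases eq_or_ne i j with rfl | hij
  · simpa using hf
  · simpa [hij] using hp i

lemma integral_prod_mul_comp_eval (hp : ∀ i, ∫ t, p i t = 1) :
    ∫ x : ι → ℝ, (∏ i, p i (x i)) * f (x j) = ∫ t, p j t * f t := by
  simp_rw [prod_mul_comp_eval_eq_prod_update]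
  rw [integral_fintype_prod_volume_eq_prod, ← Finset.mul_prod_erase _ _ (Finset.mem_univ j)]
  simp only [Function.update_self]
  rw [Finset.prod_eq_one fun i hi => by
    rw [Function.update_of_ne (Finset.ne_of_mem_erase hi), hp], mul_one]

end ProductDensity

section GaussianDensity

variable {D : ℕ} {s : ℝ}

lemma gaussD_pos (hs : s ≠ 0) (x : Fin D → ℝ) : 0 < gaussD D s x := by
  unfold gaussD
  positivity

lemma gaussD_le (x : Fin D → ℝ) : gaussD D s x ≤ (2 * π * s ^ 2) ^ (-(D : ℝ) / 2) := by
  unfold gaussD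
  refine mul_le_of_le_one_right (by positivity) (exp_le_one_iff.mpr ?_)
  exact div_nonpos_of_nonpos_of_nonneg (neg_nonpos.mpr (by positivity)) (by positivity)

@[fun_prop]
lemma continuous_gaussD : Continuous (gaussD D s) := by
  unfold gaussD
  fun_prop

lemma log_gaussD_div_gaussD_one (hs : s ≠ 0) (z x : Fin D → ℝ) :
    log (gaussD D s z / gaussD D 1 x) =
      -(D / 2 * log (s ^ 2)) + -(2 * s ^ 2)⁻¹ * ∑ i, z i ^ 2 + 2⁻¹ * ∑ i, x i ^ 2 := by
  unfold gaussD
  rw [log_div (by positivity) (by positivity), log_mul (by positivity) (by positivity),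
    log_mul (by positivity) (by positivity), log_exp, log_exp, log_rpow (by positivity),
    log_rpow (by positivity), log_mul (by positivity) (by positivity)]
  field_simp
  ring

end GaussianDensity

lemma gaussD_sub_eq_prod {D : ℕ} (s : ℝ) (a x : Fin D → ℝ) :
    gaussD D s (x - a) = ∏ i, gaussianPDFReal (a i) (s ^ 2).toNNReal (x i) := by
  have hv : ((s ^ 2).toNNReal : ℝ) = s ^ 2 := Real.coe_toNNReal _ (sq_nonneg s)
  simp only [gaussianPDFReal, hv, Finset.prod_mul_distrib, Finset.prod_const, Finset.card_univ,
    Fintype.card_fin, ← Real.exp_sum, gaussD, Pi.sub_apply]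
  congr 1
  · rw [Real.sqrt_eq_rpow, ← Real.rpow_neg (by positivity), ← Real.rpow_mul_natCast (by positivity)]
    ring_nf
  · rw [← Finset.sum_div, ← Finset.sum_neg_distrib]

section GaussianMoments

variable {D : ℕ} {s : ℝ}

lemma toNNReal_sq_ne_zero (hs : s ≠ 0) : (s ^ 2).toNNReal ≠ 0 := by
  simpa using hs

lemma integrable_gaussD_sub (a : Fin D → ℝ) : Integrable fun x => gaussD D s (x - a) := by
  simp_rw [gaussD_sub_eq_prod]
  exact .fintype_prod fun i => integrable_gaussianPDFReal _ _

lemma integral_gaussD_sub (hs : s ≠ 0) (a : Fin D → ℝ) : ∫ x, gaussD D s (x - a) = 1 := by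
  simp_rw [gaussD_sub_eq_prod]
  rw [integral_fintype_prod_volume_eq_prod]
  simp [integral_gaussianPDFReal_eq_one _ (toNNReal_sq_ne_zero hs)]

lemma integrable_gaussD_sub_mul_sum_sq (hs : s ≠ 0) (a : Fin D → ℝ) :
    Integrable fun x => gaussD D s (x - a) * ∑ i, x i ^ 2 := by
  simp_rw [gaussD_sub_eq_prod, Finset.mul_sum]
  exact integrable_finsetSum _ fun j _ => integrable_prod_mul_comp_eval _ j (· ^ 2)
    (fun i => integrable_gaussianPDFReal _ _)
    (integrable_gaussianPDFReal_mul_sq _ (toNNReal_sq_ne_zero hs))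

lemma integral_gaussD_sub_mul_sum_sq (hs : s ≠ 0) (a : Fin D → ℝ) :
    ∫ x, gaussD D s (x - a) * ∑ i, x i ^ 2 = D * s ^ 2 + ∑ i, a i ^ 2 := by
  simp_rw [gaussD_sub_eq_prod, Finset.mul_sum]
  rw [integral_finsetSum _ fun j _ => integrable_prod_mul_comp_eval _ j (· ^ 2)
    (fun i => integrable_gaussianPDFReal _ _)
    (integrable_gaussianPDFReal_mul_sq _ (toNNReal_sq_ne_zero hs))]
  simp_rw [integral_prod_mul_comp_eval _ _ (· ^ 2)
      (fun i => integral_gaussianPDFReal_eq_one _ (toNNReal_sq_ne_zero hs)),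
    integral_gaussianPDFReal_mul_sq _ (toNNReal_sq_ne_zero hs), Real.coe_toNNReal _ (sq_nonneg s),
    Finset.sum_add_distrib]
  simp

lemma integrable_gaussD_sub_mul_sum_sq_sub (hs : s ≠ 0) (a : Fin D → ℝ) :
    Integrable fun x => gaussD D s (x - a) * ∑ i, (x - a) i ^ 2 :=
  (integrable_gaussD_sub_mul_sum_sq hs 0).comp_sub_right a |>.congr <| ae_of_all _ fun x => by
    simp

lemma integral_gaussD_sub_mul_sum_sq_sub (hs : s ≠ 0) (a : Fin D → ℝ) :
    ∫ x, gaussD D s (x - a) * ∑ i, (x - a) i ^ 2 = D * s ^ 2 := by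
  rw [integral_sub_right_eq_self (fun z => gaussD D s z * ∑ i, z i ^ 2) a]
  simpa using integral_gaussD_sub_mul_sum_sq hs (0 : Fin D → ℝ)

lemma integrable_gaussD_sub_mul_quadratic (hs : s ≠ 0) (a : Fin D → ℝ) (α β γ : ℝ) :
    Integrable fun x => gaussD D s (x - a) * (α + β * ∑ i, (x - a) i ^ 2 + γ * ∑ i, x i ^ 2) := by
  simp_rw [mul_add, mul_left_comm _ β, mul_left_comm _ γ, mul_comm _ α]
  exact ((integrable_gaussD_sub a).const_mul α |>.add
    ((integrable_gaussD_sub_mul_sum_sq_sub hs a).const_mul β)).add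
    ((integrable_gaussD_sub_mul_sum_sq hs a).const_mul γ)

lemma integral_gaussD_sub_mul_quadratic (hs : s ≠ 0) (a : Fin D → ℝ) (α β γ : ℝ) :
    ∫ x, gaussD D s (x - a) * (α + β * ∑ i, (x - a) i ^ 2 + γ * ∑ i, x i ^ 2) =
      α + β * (D * s ^ 2) + γ * (D * s ^ 2 + ∑ i, a i ^ 2) := by
  have h₁ := (integrable_gaussD_sub (s := s) a).const_mul α
  have h₂ := (integrable_gaussD_sub_mul_sum_sq_sub hs a).const_mul β
  have h₃ := (integrable_gaussD_sub_mul_sum_sq hs a).const_mul γ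
  simp_rw [mul_add, mul_left_comm _ β, mul_left_comm _ γ, mul_comm _ α]
  rw [integral_add (by exact h₁.add h₂) h₃, integral_add h₁ h₂, integral_const_mul,
    integral_const_mul, integral_const_mul, integral_gaussD_sub hs,
    integral_gaussD_sub_mul_sum_sq_sub hs, integral_gaussD_sub_mul_sum_sq hs]
  ring

end GaussianMoments

section GaussianKL

variable {D : ℕ} {s : ℝ}

lemma gaussD_sub_mul_log_div_eq (hs : s ≠ 0) (a x : Fin D → ℝ) :
    gaussD D s (x - a) * log (gaussD D s (x - a) / gaussD D 1 x) =
      gaussD D s (x - a) * (-(D / 2 * log (s ^ 2)) + -(2 * s ^ 2)⁻¹ * ∑ i, (x - a) i ^ 2 +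
        2⁻¹ * ∑ i, x i ^ 2) := by
  rw [log_gaussD_div_gaussD_one hs]

lemma integrable_gaussD_sub_mul_log_div (hs : s ≠ 0) (a : Fin D → ℝ) :
    Integrable fun x => gaussD D s (x - a) * log (gaussD D s (x - a) / gaussD D 1 x) := by
  simp_rw [gaussD_sub_mul_log_div_eq hs]
  exact integrable_gaussD_sub_mul_quadratic hs a _ _ _

lemma integral_gaussD_sub_mul_log_div (hs : s ≠ 0) (a : Fin D → ℝ) :
    ∫ x, gaussD D s (x - a) * log (gaussD D s (x - a) / gaussD D 1 x) =
      D / 2 * (s ^ 2 - 1 - log (s ^ 2)) + (∑ i, a i ^ 2) / 2 := by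
  simp_rw [gaussD_sub_mul_log_div_eq hs]
  rw [integral_gaussD_sub_mul_quadratic hs]
  field_simp
  ring

lemma integral_norm_gaussD_sub_mul_log_div_le (hs : s ≠ 0) (a : Fin D → ℝ) :
    ∫ x, ‖gaussD D s (x - a) * log (gaussD D s (x - a) / gaussD D 1 x)‖ ≤
      |D / 2 * log (s ^ 2)| + D / 2 + (D * s ^ 2 + ∑ i, a i ^ 2) / 2 := by
  have hbound : ∀ x, ‖gaussD D s (x - a) * log (gaussD D s (x - a) / gaussD D 1 x)‖ ≤
      gaussD D s (x - a) * (|D / 2 * log (s ^ 2)| + (2 * s ^ 2)⁻¹ * ∑ i, (x - a) i ^ 2 +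
        2⁻¹ * ∑ i, x i ^ 2) := by
    intro x
    rw [norm_mul, norm_of_nonneg (gaussD_pos hs _).le, log_gaussD_div_gaussD_one hs]
    refine mul_le_mul_of_nonneg_left (abs_le.mpr ⟨?_, ?_⟩) (gaussD_pos hs _).le <;>
    linarith [le_abs_self (D / 2 * log (s ^ 2)), neg_abs_le (D / 2 * log (s ^ 2)),
      (by positivity : 0 ≤ (2 * s ^ 2)⁻¹ * ∑ i, (x - a) i ^ 2),
      (by positivity : (0 : ℝ) ≤ 2⁻¹ * ∑ i, x i ^ 2)]
  refine (integral_mono (integrable_gaussD_sub_mul_log_div hs a).norm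
    (integrable_gaussD_sub_mul_quadratic hs a _ _ _) hbound).trans_eq ?_
  rw [integral_gaussD_sub_mul_quadratic hs]
  field_simp

end GaussianKL

lemma neg_log_one_sub_le_two_mul {t : ℝ} (ht₀ : 0 ≤ t) (ht : t ≤ 1 / 2) :
    -log (1 - t) ≤ 2 * t := by
  have hpos : 0 < 1 - t := by linarith
  have := one_sub_inv_le_log_of_pos hpos
  rw [inv_eq_one_div, sub_div' hpos.ne', div_le_iff₀ hpos] at this
  nlinarith

lemma sum_sq_smul_le_of_mem_cube {D : ℕ} (μ : ℝ) {y : Fin D → ℝ} (hy : y ∈ cube D) :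
    ∑ i, (μ • y) i ^ 2 ≤ D * μ ^ 2 := by
  have hyi : ∀ i, (μ • y) i ^ 2 ≤ μ ^ 2 := fun i => by
    rw [Pi.smul_apply, smul_eq_mul, mul_pow]
    exact mul_le_of_le_one_right (sq_nonneg μ) (sq_le_one_iff_abs_le_one _ |>.mpr
      (abs_le.mpr ⟨hy.1 i, hy.2 i⟩))
  simpa using Finset.sum_le_sum fun i (_ : i ∈ Finset.univ) => hyi i

section Mixture

variable {D : ℕ} {s μ : ℝ}

lemma continuous_gaussD_sub_smul_mul_log_div (hs : s ≠ 0) :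
    Continuous (Function.uncurry fun x y : Fin D → ℝ =>
      gaussD D s (x - μ • y) * log (gaussD D s (x - μ • y) / gaussD D 1 x)) := by
  have hg : Continuous fun p : (Fin D → ℝ) × (Fin D → ℝ) => gaussD D s (p.1 - μ • p.2) := by
    fun_prop
  refine hg.mul (Continuous.log (hg.div (by fun_prop) fun p => (gaussD_pos one_ne_zero _).ne')
    fun p => (div_pos (gaussD_pos hs _) (gaussD_pos one_ne_zero _)).ne')

lemma integrable_gaussD_sub_smul_mul_log_div_prod (hs : s ≠ 0) {P : Measure (Fin D → ℝ)}
    [IsProbabilityMeasure P] (hP : ∀ᵐ y ∂P, y ∈ cube D) :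
    Integrable (Function.uncurry fun x y =>
      gaussD D s (x - μ • y) * log (gaussD D s (x - μ • y) / gaussD D 1 x)) (volume.prod P) := by
  have hF := continuous_gaussD_sub_smul_mul_log_div (D := D) (μ := μ) hs
  rw [integrable_prod_iff' hF.aestronglyMeasurable]
  constructor
  · exact ae_of_all _ fun y => integrable_gaussD_sub_mul_log_div hs (μ • y)
  · refine .mono' (integrable_const (|D / 2 * log (s ^ 2)| + D / 2 + (D * s ^ 2 + D * μ ^ 2) / 2))
      hF.norm.stronglyMeasurable.integral_prod_left'.aestronglyMeasurable ?_
    filter_upwards [hP] with y hy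
    rw [norm_of_nonneg (integral_nonneg fun x => norm_nonneg _)]
    refine (integral_norm_gaussD_sub_mul_log_div_le hs (μ • y)).trans ?_
    have := sum_sq_smul_le_of_mem_cube μ hy
    linarith

lemma integral_gaussD_sub_smul_mul_log_div_le (hμ : μ ^ 2 ≤ 1 / 2) {y : Fin D → ℝ}
    (hy : y ∈ cube D) :
    ∫ x, gaussD D √(1 - μ ^ 2) (x - μ • y) *
        log (gaussD D √(1 - μ ^ 2) (x - μ • y) / gaussD D 1 x) ≤ D * μ ^ 2 := by
  have hpos : 0 < 1 - μ ^ 2 := by linarith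
  rw [integral_gaussD_sub_mul_log_div (sqrt_pos.mpr hpos).ne', sq_sqrt hpos.le]
  have hlog := neg_log_one_sub_le_two_mul (sq_nonneg μ) hμ
  have hy := sum_sq_smul_le_of_mem_cube μ hy
  have hD : (0 : ℝ) ≤ D := D.cast_nonneg
  nlinarith

end Mixture

theorem statement_19_general
    (D : ℕ) (P₀ : Measure (Fin D → ℝ)) (hP : IsProbabilityMeasure P₀)
    (hsupp : P₀ (cube D) = 1)
    (μ : ℝ) (hμ2 : μ ^ 2 ≤ 1 / 2) :
    (∫ x, (∫ y, gaussD D (Real.sqrt (1 - μ ^ 2)) (x - μ • y) ∂P₀) *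
        Real.log ((∫ y, gaussD D (Real.sqrt (1 - μ ^ 2)) (x - μ • y) ∂P₀) /
          gaussD D 1 x)) ≤
      5 * (D : ℝ) / 4 * μ ^ 2 := by
  have := hP
  have hs : √(1 - μ ^ 2) ≠ 0 := (sqrt_pos.mpr (by linarith)).ne'
  have hcube : ∀ᵐ y ∂P₀, y ∈ cube D :=
    (ae_iff_measure_eq measurableSet_Icc.nullMeasurableSet).mpr (by rw [measure_univ]; exact hsupp)
  have hF := integrable_gaussD_sub_smul_mul_log_div_prod hs (μ := μ) hcube
  set s := √(1 - μ ^ 2)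
  by_cases hmix : Integrable fun x =>
    (∫ y, gaussD D s (x - μ • y) ∂P₀) * log ((∫ y, gaussD D s (x - μ • y) ∂P₀) / gaussD D 1 x)
  · calc _ ≤ ∫ y, (∫ x, gaussD D s (x - μ • y) * log (gaussD D s (x - μ • y) / gaussD D 1 x)) ∂P₀ :=
          integral_mixture_mul_log_div_le (fun x => by fun_prop)
            (fun _ _ => (gaussD_pos hs _).le) (fun _ _ => gaussD_le _)
            (fun x => (gaussD_pos one_ne_zero x).ne') hmix hF
      _ ≤ ∫ _, (D * μ ^ 2 : ℝ) ∂P₀ :=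
          integral_mono_ae hF.integral_prod_right (integrable_const _)
            (hcube.mono fun y hy => integral_gaussD_sub_smul_mul_log_div_le hμ2 hy)
      _ ≤ 5 * D / 4 * μ ^ 2 := by
          simp only [integral_const, probReal_univ, one_smul]
          nlinarith [D.cast_nonneg (α := ℝ), sq_nonneg μ]
  · rw [integral_undef hmix]
    positivity

/-- Kullback–Leibler step in the proof of Theorem 2: the density of
`μY + σZ` with `Y ∼ P₀` supported on `[-1,1]^D`, `Z ∼ N(0, I_D)` and `σ = √(1-μ²)`
satisfies `KL(q, φ₁) ≤ (5D/4) μ²` whenever `μ² ≤ 1/2`. -/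
theorem statement_19
    (D : ℕ) (hD : 0 < D) (P₀ : Measure (Fin D → ℝ)) (hP : IsProbabilityMeasure P₀)
    (hsupp : P₀ (cube D) = 1)
    (μ : ℝ) (hμ0 : 0 < μ) (hμ1 : μ < 1) (hμ2 : μ ^ 2 ≤ 1 / 2) :
    (∫ x, (∫ y, gaussD D (Real.sqrt (1 - μ ^ 2)) (x - μ • y) ∂P₀) *
        Real.log ((∫ y, gaussD D (Real.sqrt (1 - μ ^ 2)) (x - μ • y) ∂P₀) /
          gaussD D 1 x)) ≤
      5 * (D : ℝ) / 4 * μ ^ 2 :=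
  statement_19_general D P₀ hP hsupp μ hμ2

end DMpaper

end
end
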